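/- arXiv:2605.05086 — 2 statements merged into one kernel-verified Lean document; each statement's English description precedes it below -/
import Mathlib

section
/- The score of a best shift move is a step function whose steps occur only at breakpoints and at the incumbent value: if x̂_j¹ and x̂_j² both lie in an open interval (u, v) ⊆ ℝ that contains neither the incumbent value x̄_j nor any breakpoint t_{ij} of a constraint i with a_{ij} ≠ 0, then s_j(x̂_j¹, x̄) = s_j(x̂_j², x̄). -/
open Finset

/-- Activity of constraint `i` at the incumbent point `xbar`. -/
noncomputable def activity {m n : ℕ} (a : Fin m → Fin n → ℝ) (xbar : Fin n → ℝ)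
    (i : Fin m) : ℝ :=
  ∑ k, a i k * xbar k

/-- Moved activity of constraint `i` when variable `j` takes candidate value `xhat`. -/
noncomputable def movedActivity {m n : ℕ} (a : Fin m → Fin n → ℝ) (xbar : Fin n → ℝ)
    (j : Fin n) (i : Fin m) (xhat : ℝ) : ℝ :=
  (∑ k ∈ Finset.univ.erase j, a i k * xbar k) + a i j * xhat

/-- Penalty of moving variable `j` from `xbar j` to `xhat` w.r.t. constraint `i`. -/
noncomputable def penalty {m n : ℕ} (a : Fin m → Fin n → ℝ) (b w : Fin m → ℝ)
    (xbar : Fin n → ℝ) (j : Fin n) (i : Fin m) (xhat : ℝ) : ℝ :=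
  if activity a xbar i ≤ b i ∧ movedActivity a xbar j i xhat > b i then -w i
  else if activity a xbar i > b i ∧ movedActivity a xbar j i xhat ≤ b i then w i
  else if activity a xbar i > b i ∧ movedActivity a xbar j i xhat > b i ∧
      movedActivity a xbar j i xhat < activity a xbar i then w i / 2
  else if activity a xbar i > b i ∧ movedActivity a xbar j i xhat > b i ∧
      movedActivity a xbar j i xhat > activity a xbar i then -w i / 2
  else 0

/-- Score of moving variable `j` to candidate value `xhat`. -/
noncomputable def score {m n : ℕ} (a : Fin m → Fin n → ℝ) (b w : Fin m → ℝ)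
    (xbar : Fin n → ℝ) (j : Fin n) (xhat : ℝ) : ℝ :=
  ∑ i, penalty a b w xbar j i xhat

/-- Breakpoint of constraint `i` for variable `j` (meaningful when `a i j ≠ 0`). -/
noncomputable def breakpoint {m n : ℕ} (a : Fin m → Fin n → ℝ) (b : Fin m → ℝ)
    (xbar : Fin n → ℝ) (j : Fin n) (i : Fin m) : ℝ :=
  (b i - ∑ k ∈ Finset.univ.erase j, a i k * xbar k) / a i j

/-!
The penalty `p_{ij}` only depends on how the moved activity `y_{ij}` compares with `b_i` and
with `ȳ_i`. As a function of `x̂_j`, `y_{ij}` is affine, equal to `b_i` at the breakpoint `t_{ij}`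
and to `ȳ_i` at `x̄_j`; so for `a_{ij} ≠ 0` these comparisons are those of `x̂_j` with `t_{ij}` and
`x̄_j` (reversed if `a_{ij} < 0`), which do not change on an interval avoiding both points. For
`a_{ij} = 0` the moved activity does not depend on `x̂_j` at all.
-/

lemma cmp_eq_cmp_of_notMem_Ioo {α : Type*} [LinearOrder α] {u v t x₁ x₂ : α}
    (ht : t ∉ Set.Ioo u v) (h₁ : x₁ ∈ Set.Ioo u v) (h₂ : x₂ ∈ Set.Ioo u v) :
    cmp x₁ t = cmp x₂ t := by
  rcases le_or_gt t u with htu | hut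
  · rw [(cmp_eq_gt_iff _ _).2 (htu.trans_lt h₁.1), (cmp_eq_gt_iff _ _).2 (htu.trans_lt h₂.1)]
  · have hvt : v ≤ t := not_lt.1 fun htv => ht ⟨hut, htv⟩
    rw [(cmp_eq_lt_iff _ _).2 (h₁.2.trans_le hvt), (cmp_eq_lt_iff _ _).2 (h₂.2.trans_le hvt)]

lemma cmp_add_mul_eq_cmp_add_mul_of_notMem_Ioo {R : Type*} [Ring R] [LinearOrder R]
    [IsStrictOrderedRing R] (c A : R) {u v t x₁ x₂ : R} (ht : t ∉ Set.Ioo u v)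
    (h₁ : x₁ ∈ Set.Ioo u v) (h₂ : x₂ ∈ Set.Ioo u v) :
    cmp (c + A * x₁) (c + A * t) = cmp (c + A * x₂) (c + A * t) := by
  rcases lt_trichotomy A 0 with hA | rfl | hA
  · have hf : StrictAnti fun x => c + A * x := fun _ _ h => by
      simpa using mul_lt_mul_of_neg_left h hA
    rw [hf.cmp_map_eq, hf.cmp_map_eq, ← cmp_swap x₁ t, ← cmp_swap x₂ t,
      cmp_eq_cmp_of_notMem_Ioo ht h₁ h₂]
  · simp
  · have hf : StrictMono fun x => c + A * x := fun _ _ h => by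
      simpa using mul_lt_mul_of_pos_left h hA
    rw [hf.cmp_map_eq, hf.cmp_map_eq, cmp_eq_cmp_of_notMem_Ioo ht h₁ h₂]

section Score

variable {m n : ℕ} (a : Fin m → Fin n → ℝ) (b w : Fin m → ℝ) (xbar : Fin n → ℝ) (j : Fin n)
  (i : Fin m)

lemma activity_eq_movedActivity_self :
    activity a xbar i = movedActivity a xbar j i (xbar j) := by
  rw [activity, movedActivity, Finset.sum_erase_add _ _ (Finset.mem_univ j)]

variable {a} in
lemma movedActivity_breakpoint (h : a i j ≠ 0) :
    movedActivity a xbar j i (breakpoint a b xbar j i) = b i := by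
  rw [movedActivity, breakpoint, mul_div_cancel₀ _ h, add_sub_cancel]

lemma penalty_eq_of_cmp_eq {xhat₁ xhat₂ : ℝ}
    (hb : cmp (movedActivity a xbar j i xhat₁) (b i) = cmp (movedActivity a xbar j i xhat₂) (b i))
    (hact : cmp (movedActivity a xbar j i xhat₁) (activity a xbar i) =
      cmp (movedActivity a xbar j i xhat₂) (activity a xbar i)) :
    penalty a b w xbar j i xhat₁ = penalty a b w xbar j i xhat₂ := by
  simp only [penalty, gt_iff_lt, le_iff_le_of_cmp_eq_cmp hb, lt_iff_lt_of_cmp_eq_cmp hact,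
    lt_iff_lt_of_cmp_eq_cmp (cmp_eq_cmp_symm.1 hb),
    lt_iff_lt_of_cmp_eq_cmp (cmp_eq_cmp_symm.1 hact)]

end Score

theorem score_constant_on_breakpoint_free_interval_general
    {m n : ℕ} (a : Fin m → Fin n → ℝ) (b w : Fin m → ℝ)
    (xbar : Fin n → ℝ) (j : Fin n)
    (u v : ℝ) (hxbar : xbar j ∉ Set.Ioo u v)
    (hbp : ∀ i : Fin m, a i j ≠ 0 → breakpoint a b xbar j i ∉ Set.Ioo u v)
    (xhat₁ xhat₂ : ℝ) (h₁ : xhat₁ ∈ Set.Ioo u v) (h₂ : xhat₂ ∈ Set.Ioo u v) :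
    score a b w xbar j xhat₁ = score a b w xbar j xhat₂ := by
  refine Finset.sum_congr rfl fun i _ => penalty_eq_of_cmp_eq a b w xbar j i ?_ ?_
  · by_cases hA : a i j = 0
    · simp [movedActivity, hA]
    · rw [← movedActivity_breakpoint b xbar j i hA]
      exact cmp_add_mul_eq_cmp_add_mul_of_notMem_Ioo _ _ (hbp i hA) h₁ h₂
  · rw [activity_eq_movedActivity_self a xbar j i]
    exact cmp_add_mul_eq_cmp_add_mul_of_notMem_Ioo _ _ hxbar h₁ h₂

/-- The score is a step function with steps only at breakpoints and at the incumbent: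
it is constant on any open interval containing neither the incumbent value nor any breakpoint. -/
theorem score_constant_on_breakpoint_free_interval
    {m n : ℕ} (a : Fin m → Fin n → ℝ) (b w : Fin m → ℝ)
    (xbar : Fin n → ℝ) (j : Fin n) (hw : ∀ i, 0 ≤ w i)
    (u v : ℝ) (hxbar : xbar j ∉ Set.Ioo u v)
    (hbp : ∀ i : Fin m, a i j ≠ 0 → breakpoint a b xbar j i ∉ Set.Ioo u v)
    (xhat₁ xhat₂ : ℝ) (h₁ : xhat₁ ∈ Set.Ioo u v) (h₂ : xhat₂ ∈ Set.Ioo u v) :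
    score a b w xbar j xhat₁ = score a b w xbar j xhat₂ :=
  score_constant_on_breakpoint_free_interval_general a b w xbar j u v hxbar hbp xhat₁ xhat₂ h₁ h₂
end

section
/- Finite candidate set for the integer best shift move: let l_j ≤ u_j be variable bounds, suppose x̄_j is an integer with l_j ≤ x̄_j ≤ u_j, and let F_ℤ := (({⌊t_{ij}⌋ : a_{ij} > 0} ∪ {⌈t_{ij}⌉ : a_{ij} < 0}) ∩ [l_j, u_j]) ∪ {⌈l_j⌉, ⌊u_j⌋, x̄_j}. Then the score attains its maximum over the integers in [l_j, u_j] at a point of F_ℤ; that is, there exists z ∈ F_ℤ such that s_j(z, x̄) ≥ s_j(x̂_j, x̄) for every integer x̂_j ∈ [l_j, u_j]. -/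
open Finset

/-!
Moving away from the incumbent, the moved activity `y` of each constraint moves monotonically
away from its current activity `ȳ`. As a function of `y` the penalty is antitone, and on the far
side `y > ȳ` it only depends on whether `y ≤ b`. Hence one more integer step away from `x̄ⱼ`
never decreases the score unless it carries the activity of some constraint across its
right-hand side, i.e. unless the current point is a rounded breakpoint. Walking from an integer
maximiser of the score away from `x̄ⱼ` until such a point or a rounded bound is reached
therefore ends in the candidate set with a score that is still maximal.
-/

namespace Int

theorem exists_le_apply_of_le_apply_add_one {α : Type*} [Preorder α] {f : ℤ → α} {S : Set ℤ}
    {N : ℤ} (hf : ∀ x < N, x ∉ S → f x ≤ f (x + 1)) {x : ℤ} (hx : x ≤ N) :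
    ∃ z ∈ insert N S, z ∈ Set.Icc x N ∧ f x ≤ f z := by
  induction x, hx using Int.leInductionDown with
  | base => exact ⟨N, Set.mem_insert N S, ⟨le_rfl, le_rfl⟩, le_rfl⟩
  | pred x hx ih =>
    by_cases hxS : x - 1 ∈ S
    · exact ⟨x - 1, Set.mem_insert_of_mem N hxS, ⟨le_rfl, by lia⟩, le_rfl⟩
    obtain ⟨z, hzS, ⟨hxz, hzN⟩, hle⟩ := ih
    have hstep : f (x - 1) ≤ f x := by simpa using hf (x - 1) (by lia) hxS
    exact ⟨z, hzS, ⟨by lia, hzN⟩, hstep.trans hle⟩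

theorem exists_le_apply_of_le_apply_sub_one {α : Type*} [Preorder α] {f : ℤ → α} {S : Set ℤ}
    {N : ℤ} (hf : ∀ x > N, x ∉ S → f x ≤ f (x - 1)) {x : ℤ} (hx : N ≤ x) :
    ∃ z ∈ insert N S, z ∈ Set.Icc N x ∧ f x ≤ f z := by
  induction x, hx using Int.leInduction with
  | base => exact ⟨N, Set.mem_insert N S, ⟨le_rfl, le_rfl⟩, le_rfl⟩
  | succ x hx ih =>
    by_cases hxS : x + 1 ∈ S
    · exact ⟨x + 1, Set.mem_insert_of_mem N hxS, ⟨by lia, le_rfl⟩, le_rfl⟩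
    obtain ⟨z, hzS, ⟨hNz, hzx⟩, hle⟩ := ih
    have hstep : f (x + 1) ≤ f x := by simpa using hf (x + 1) (by lia) hxS
    exact ⟨z, hzS, ⟨hNz, by lia⟩, hstep.trans hle⟩

end Int

noncomputable def shiftPenalty (ybar b w y : ℝ) : ℝ :=
  if ybar ≤ b ∧ y > b then -w
  else if ybar > b ∧ y ≤ b then w
  else if ybar > b ∧ y > b ∧ y < ybar then w / 2
  else if ybar > b ∧ y > b ∧ y > ybar then -w / 2
  else 0

theorem shiftPenalty_antitone {ybar b w : ℝ} (hw : 0 ≤ w) :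
    Antitone (shiftPenalty ybar b w) := by
  intro y y' _
  unfold shiftPenalty
  grind

theorem shiftPenalty_le_of_lt_of_le {ybar b w y y' : ℝ} (hy : ybar < y) (hyy' : y ≤ y')
    (hb : y' ≤ b ∨ b < y) : shiftPenalty ybar b w y ≤ shiftPenalty ybar b w y' := by
  unfold shiftPenalty
  grind

section Shift

variable {m n : ℕ} (a : Fin m → Fin n → ℝ) (b w : Fin m → ℝ) (xbar : Fin n → ℝ) (j : Fin n)
  (i : Fin m)

theorem penalty_eq_shiftPenalty (x : ℝ) :
    penalty a b w xbar j i x =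
      shiftPenalty (activity a xbar i) (b i) (w i) (movedActivity a xbar j i x) :=
  rfl

theorem movedActivity_self : movedActivity a xbar j i (xbar j) = activity a xbar i := by
  rw [activity, movedActivity, ← Finset.sum_erase_add _ _ (Finset.mem_univ j)]

variable {a i}

theorem movedActivity_strictMono (h : 0 < a i j) : StrictMono (movedActivity a xbar j i) :=
  fun _ _ hx => add_lt_add_right (mul_lt_mul_of_pos_left hx h) _

theorem movedActivity_monotone (h : 0 ≤ a i j) : Monotone (movedActivity a xbar j i) :=
  fun _ _ hx => add_le_add_right (mul_le_mul_of_nonneg_left hx h) _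

theorem movedActivity_strictAnti (h : a i j < 0) : StrictAnti (movedActivity a xbar j i) :=
  fun _ _ hx => add_lt_add_right (mul_lt_mul_of_neg_left hx h) _

theorem movedActivity_antitone (h : a i j ≤ 0) : Antitone (movedActivity a xbar j i) :=
  fun _ _ hx => add_le_add_right (mul_le_mul_of_nonpos_left hx h) _

theorem le_breakpoint_iff (h : 0 < a i j) {x : ℝ} :
    x ≤ breakpoint a b xbar j i ↔ movedActivity a xbar j i x ≤ b i := by
  rw [breakpoint, le_div_iff₀ h, movedActivity]
  constructor <;> intro <;> linarith

theorem breakpoint_le_iff (h : a i j < 0) {x : ℝ} :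
    breakpoint a b xbar j i ≤ x ↔ movedActivity a xbar j i x ≤ b i := by
  rw [breakpoint, div_le_iff_of_neg h, movedActivity]
  constructor <;> intro <;> linarith

variable {w}

theorem penalty_le_of_lt_of_le (hw : 0 ≤ w i) {x x' : ℝ} (hx : xbar j < x) (hxx' : x ≤ x')
    (hbp : 0 < a i j → breakpoint a b xbar j i ∉ Set.Ico x x') :
    penalty a b w xbar j i x ≤ penalty a b w xbar j i x' := by
  rw [penalty_eq_shiftPenalty, penalty_eq_shiftPenalty]
  rcases le_or_gt (a i j) 0 with ha | ha
  · exact shiftPenalty_antitone hw (movedActivity_antitone xbar j ha hxx')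
  refine shiftPenalty_le_of_lt_of_le ?_ (movedActivity_strictMono xbar j ha |>.monotone hxx') ?_
  · simpa only [movedActivity_self] using movedActivity_strictMono xbar j ha hx
  by_contra! hcross
  exact hbp ha ⟨(le_breakpoint_iff b xbar j ha).2 hcross.2,
    not_le.1 fun h => hcross.1.not_ge ((le_breakpoint_iff b xbar j ha).1 h)⟩

theorem penalty_le_of_le_of_lt (hw : 0 ≤ w i) {x x' : ℝ} (hx : x < xbar j) (hx'x : x' ≤ x)
    (hbp : a i j < 0 → breakpoint a b xbar j i ∉ Set.Ioc x' x) :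
    penalty a b w xbar j i x ≤ penalty a b w xbar j i x' := by
  rw [penalty_eq_shiftPenalty, penalty_eq_shiftPenalty]
  rcases le_or_gt 0 (a i j) with ha | ha
  · exact shiftPenalty_antitone hw (movedActivity_monotone xbar j ha hx'x)
  refine shiftPenalty_le_of_lt_of_le ?_ (movedActivity_strictAnti xbar j ha |>.antitone hx'x) ?_
  · simpa only [movedActivity_self] using movedActivity_strictAnti xbar j ha hx
  by_contra! hcross
  exact hbp ha ⟨not_le.1 fun h => hcross.1.not_ge ((breakpoint_le_iff b xbar j ha).1 h),
    (breakpoint_le_iff b xbar j ha).2 hcross.2⟩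

variable (a)

/-- The set `F_ℤ` of the paper. -/
def intCandidates (l u : ℝ) : Set ℝ :=
  (({t : ℝ | ∃ i : Fin m, a i j > 0 ∧ t = (⌊breakpoint a b xbar j i⌋ : ℝ)} ∪
      {t : ℝ | ∃ i : Fin m, a i j < 0 ∧ t = (⌈breakpoint a b xbar j i⌉ : ℝ)}) ∩
    Set.Icc l u) ∪ {(⌈l⌉ : ℝ), (⌊u⌋ : ℝ), xbar j}

variable {b xbar j}

theorem exists_intCandidates_score_ge_of_incumbent_lt (hw : ∀ i, 0 ≤ w i) {l u : ℝ} {x : ℤ}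
    (hx : xbar j < x) (hl : l ≤ x) (hu : x ≤ u) :
    ∃ z ∈ intCandidates a b xbar j l u, score a b w xbar j x ≤ score a b w xbar j z := by
  let S : Set ℤ := {y | (y : ℝ) ≤ xbar j ∨
    ∃ i, 0 < a i j ∧ breakpoint a b xbar j i ∈ Set.Ico (y : ℝ) (y + 1)}
  have hstep : ∀ y < ⌊u⌋, y ∉ S →
      score a b w xbar j (y : ℤ) ≤ score a b w xbar j ((y + 1 : ℤ) : ℝ) := by
    intro y _ hy
    simp only [S, Set.mem_ofPred_eq, not_or, not_exists, not_and, not_le] at hy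
    push_cast
    exact Finset.sum_le_sum fun i _ => penalty_le_of_lt_of_le b xbar j (hw i) hy.1
      (by linarith) (hy.2 i)
  obtain ⟨z, hzS, ⟨hxz, hzu⟩, hle⟩ :=
    Int.exists_le_apply_of_le_apply_add_one hstep (Int.le_floor.2 hu)
  replace hxz : (x : ℝ) ≤ z := by exact_mod_cast hxz
  refine ⟨z, ?_, hle⟩
  rcases hzS with rfl | hz | ⟨i, hi, hzi⟩
  · exact Or.inr (Or.inr (Or.inl rfl))
  · linarith
  · refine Or.inl ⟨Or.inl ⟨i, hi, by rw [Int.floor_eq_iff.2 hzi]⟩, by linarith, ?_⟩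
    exact (Int.cast_le.2 hzu).trans (Int.floor_le u)

theorem exists_intCandidates_score_ge_of_lt_incumbent (hw : ∀ i, 0 ≤ w i) {l u : ℝ} {x : ℤ}
    (hx : (x : ℝ) < xbar j) (hl : l ≤ x) (hu : x ≤ u) :
    ∃ z ∈ intCandidates a b xbar j l u, score a b w xbar j x ≤ score a b w xbar j z := by
  let S : Set ℤ := {y | xbar j ≤ y ∨
    ∃ i, a i j < 0 ∧ breakpoint a b xbar j i ∈ Set.Ioc (y - 1 : ℝ) y}
  have hstep : ∀ y > ⌈l⌉, y ∉ S →
      score a b w xbar j (y : ℤ) ≤ score a b w xbar j ((y - 1 : ℤ) : ℝ) := by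
    intro y _ hy
    simp only [S, Set.mem_ofPred_eq, not_or, not_exists, not_and, not_le] at hy
    push_cast
    exact Finset.sum_le_sum fun i _ => penalty_le_of_le_of_lt b xbar j (hw i) hy.1
      (by linarith) (hy.2 i)
  obtain ⟨z, hzS, ⟨hlz, hzx⟩, hle⟩ :=
    Int.exists_le_apply_of_le_apply_sub_one hstep (Int.ceil_le.2 hl)
  replace hzx : (z : ℝ) ≤ x := by exact_mod_cast hzx
  refine ⟨z, ?_, hle⟩
  rcases hzS with rfl | hz | ⟨i, hi, hzi⟩
  · exact Or.inr (Or.inl rfl)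
  · linarith
  · refine Or.inl ⟨Or.inr ⟨i, hi, by rw [Int.ceil_eq_iff.2 hzi]⟩, ?_, by linarith⟩
    exact (Int.le_ceil l).trans (Int.cast_le.2 hlz)

theorem exists_intCandidates_score_ge (hw : ∀ i, 0 ≤ w i) {l u : ℝ} {x : ℤ}
    (hl : l ≤ x) (hu : x ≤ u) :
    ∃ z ∈ intCandidates a b xbar j l u, score a b w xbar j x ≤ score a b w xbar j z := by
  rcases lt_trichotomy (x : ℝ) (xbar j) with hx | hx | hx
  · exact exists_intCandidates_score_ge_of_lt_incumbent a hw hx hl hu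
  · exact ⟨xbar j, Or.inr (Or.inr (Or.inr rfl)), hx ▸ le_rfl⟩
  · exact exists_intCandidates_score_ge_of_incumbent_lt a hw hx hl hu

end Shift

theorem best_integer_shift_attained_on_candidate_set_general
    {m n : ℕ} (a : Fin m → Fin n → ℝ) (b w : Fin m → ℝ)
    (xbar : Fin n → ℝ) (j : Fin n) (hw : ∀ i, 0 ≤ w i)
    (l u : ℝ) :
    ∃ z ∈ (({t : ℝ | ∃ i : Fin m, a i j > 0 ∧ t = (⌊breakpoint a b xbar j i⌋ : ℝ)} ∪
          {t : ℝ | ∃ i : Fin m, a i j < 0 ∧ t = (⌈breakpoint a b xbar j i⌉ : ℝ)}) ∩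
        Set.Icc l u) ∪ {(⌈l⌉ : ℝ), (⌊u⌋ : ℝ), xbar j},
      ∀ xhat : ℝ, (∃ k : ℤ, xhat = (k : ℝ)) → xhat ∈ Set.Icc l u →
        score a b w xbar j xhat ≤ score a b w xbar j z := by
  have mem_Icc_of_mem_Icc {k : ℤ} (hk : (k : ℝ) ∈ Set.Icc l u) : k ∈ Finset.Icc ⌈l⌉ ⌊u⌋ :=
    Finset.mem_Icc.2 ⟨Int.ceil_le.2 hk.1, Int.le_floor.2 hk.2⟩
  rcases (Finset.Icc ⌈l⌉ ⌊u⌋).eq_empty_or_nonempty with hempty | hne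
  · refine ⟨xbar j, Or.inr (Or.inr (Or.inr rfl)), ?_⟩
    rintro _ ⟨k, rfl⟩ hk
    simpa [hempty] using mem_Icc_of_mem_Icc hk
  obtain ⟨x, hx, hmax⟩ := (Finset.Icc ⌈l⌉ ⌊u⌋).exists_max_image
    (fun k : ℤ => score a b w xbar j k) hne
  obtain ⟨hlx, hxu⟩ := Finset.mem_Icc.1 hx
  obtain ⟨z, hz, hle⟩ := exists_intCandidates_score_ge a hw
    ((Int.le_ceil l).trans (Int.cast_le.2 hlx)) ((Int.cast_le.2 hxu).trans (Int.floor_le u))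
  refine ⟨z, hz, ?_⟩
  rintro _ ⟨k, rfl⟩ hk
  exact (hmax k (mem_Icc_of_mem_Icc hk)).trans hle

/-- Finite candidate set for the integer best shift move: the score attains its maximum
over the integers in `[l, u]` at a rounded breakpoint within the bounds, at a rounded
bound, or at the (integral) incumbent. -/
theorem best_integer_shift_attained_on_candidate_set
    {m n : ℕ} (a : Fin m → Fin n → ℝ) (b w : Fin m → ℝ)
    (xbar : Fin n → ℝ) (j : Fin n) (hw : ∀ i, 0 ≤ w i)
    (l u : ℝ) (hlu : l ≤ u) (hint : ∃ k : ℤ, xbar j = (k : ℝ))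
    (hl : l ≤ xbar j) (hu : xbar j ≤ u) :
    ∃ z ∈ (({t : ℝ | ∃ i : Fin m, a i j > 0 ∧ t = (⌊breakpoint a b xbar j i⌋ : ℝ)} ∪
          {t : ℝ | ∃ i : Fin m, a i j < 0 ∧ t = (⌈breakpoint a b xbar j i⌉ : ℝ)}) ∩
        Set.Icc l u) ∪ {(⌈l⌉ : ℝ), (⌊u⌋ : ℝ), xbar j},
      ∀ xhat : ℝ, (∃ k : ℤ, xhat = (k : ℝ)) → xhat ∈ Set.Icc l u →
        score a b w xbar j xhat ≤ score a b w xbar j z :=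
  best_integer_shift_attained_on_candidate_set_general a b w xbar j hw l u
end
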